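/- arXiv:2409.08712 — 4 statements merged into one kernel-verified Lean document; each statement's English description precedes it below -/
import Mathlib

section
/- For any set function v_or : Finset N → ℝ, defining the OR interaction by I_or(S) = -Σ_{T⊆S} (-1)^{|S|-|T|} v_or(N\T) for S ≠ ∅ and I_or(∅) = v_or(N), one has for every T ⊆ N: Σ_{S : S∩T ≠ ∅} I_or(S) = v_or(T) - v_or(∅). -/
open Finset

lemma or_inner_sum_aux {α : Type*} [DecidableEq α] (M U : Finset α) (hU : U ⊆ M) :
    ∑ S ∈ M.powerset.filter (fun S => U ⊆ S), (-1 : ℝ) ^ (S.card - U.card)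
      = if U = M then 1 else 0 := by
  have hbij : ∑ S ∈ M.powerset.filter (fun S => U ⊆ S), (-1 : ℝ) ^ (S.card - U.card)
      = ∑ V ∈ (M \ U).powerset, (-1 : ℝ) ^ V.card := by
    refine Finset.sum_nbij' (fun S => S \ U) (fun V => V ∪ U) ?_ ?_ ?_ ?_ ?_
    · intro S hS
      simp only [mem_filter, mem_powerset] at hS ⊢
      exact sdiff_subset_sdiff hS.1 (Subset.refl U)
    · intro V hV
      simp only [mem_filter, mem_powerset] at hV ⊢
      constructor
      · exact union_subset (hV.trans (sdiff_subset)) hU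
      · exact subset_union_right
    · intro S hS
      simp only [mem_filter, mem_powerset] at hS
      exact sdiff_union_of_subset hS.2
    · intro V hV
      simp only [mem_powerset] at hV
      have hdisj : Disjoint V U := disjoint_of_subset_left hV sdiff_disjoint
      rw [union_sdiff_cancel_right hdisj]
    · intro S hS
      simp only [mem_filter, mem_powerset] at hS
      rw [card_sdiff_of_subset hS.2]
  rw [hbij]
  have := @Finset.sum_powerset_neg_one_pow_card α _ (M \ U)
  have h2 : ∑ V ∈ (M \ U).powerset, (-1 : ℝ) ^ V.card
      = ((∑ V ∈ (M \ U).powerset, (-1 : ℤ) ^ V.card : ℤ) : ℝ) := by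
    push_cast; rfl
  rw [h2, this]
  have : M \ U = ∅ ↔ U = M := by
    rw [sdiff_eq_empty_iff_subset]
    exact ⟨fun h => Subset.antisymm hU h, fun h => h ▸ Subset.refl M⟩
  split_ifs with h1 h2 h2 <;> simp_all

lemma key {α : Type*} [DecidableEq α] (M : Finset α) (f : Finset α → ℝ) :
    ∑ S ∈ M.powerset, ∑ U ∈ S.powerset, (-1 : ℝ) ^ (S.card - U.card) * f U = f M := by
  rw [Finset.sum_comm' (t' := M.powerset) (s' := fun U => M.powerset.filter (fun S => U ⊆ S))
    (by intro S U; simp only [mem_powerset, mem_filter]; tauto)]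
  rw [Finset.sum_eq_single M]
  · rw [← Finset.sum_mul, or_inner_sum_aux M M (Subset.refl M)]
    simp
  · intro U hU hne
    rw [← Finset.sum_mul, or_inner_sum_aux M U (mem_powerset.mp hU), if_neg hne, zero_mul]
  · simp

lemma powerset_total {α : Type*} [DecidableEq α]
    (N : Finset α) (vor : Finset α → ℝ) (Ior : Finset α → ℝ)
    (hIor_empty : Ior ∅ = vor N)
    (hIor : ∀ S : Finset α, S ≠ ∅ →
      Ior S = -∑ T ∈ S.powerset, (-1 : ℝ) ^ (S.card - T.card) * vor (N \ T))
    (M : Finset α) :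
    ∑ S ∈ M.powerset, Ior S = 2 * vor N - vor (N \ M) := by
  have hmem : (∅ : Finset α) ∈ M.powerset := mem_powerset.mpr (empty_subset M)
  rw [← Finset.add_sum_erase _ Ior hmem, hIor_empty]
  have h1 : ∑ S ∈ M.powerset.erase ∅, Ior S
      = -∑ S ∈ M.powerset.erase ∅,
          ∑ U ∈ S.powerset, (-1 : ℝ) ^ (S.card - U.card) * vor (N \ U) := by
    rw [← Finset.sum_neg_distrib]
    exact Finset.sum_congr rfl fun S hS => by
      rw [hIor S (Finset.mem_erase.mp hS).1]
  rw [h1]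
  have h2 := key M (fun U => vor (N \ U))
  rw [← Finset.add_sum_erase _ _ hmem] at h2
  simp only [powerset_empty, sum_singleton, card_empty, Nat.sub_zero, pow_zero, one_mul,
    sdiff_empty] at h2 ⊢
  linarith


/-- Summing OR interactions over all `S ⊆ N` intersecting `T` recovers
`v_or(T) - v_or(∅)`. -/

theorem or_interaction_sum {α : Type*} [DecidableEq α]
    (N : Finset α) (vor : Finset α → ℝ)
    (Ior : Finset α → ℝ)
    (hIor_empty : Ior ∅ = vor N)
    (hIor : ∀ S : Finset α, S ≠ ∅ →
      Ior S = -∑ T ∈ S.powerset, (-1 : ℝ) ^ (S.card - T.card) * vor (N \ T))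
    (T : Finset α) (hT : T ⊆ N) :
    ∑ S ∈ N.powerset.filter (fun S => (S ∩ T).Nonempty), Ior S
      = vor T - vor ∅ := by
  have hsplit := Finset.sum_filter_add_sum_filter_not N.powerset
    (fun S => (S ∩ T).Nonempty) Ior
  have hfilt : N.powerset.filter (fun S => ¬ (S ∩ T).Nonempty) = (N \ T).powerset := by
    ext S
    simp only [mem_filter, mem_powerset, Finset.not_nonempty_iff_eq_empty,
      ← Finset.disjoint_iff_inter_eq_empty, Finset.subset_sdiff]
  rw [hfilt] at hsplit
  have hN := powerset_total N vor Ior hIor_empty hIor N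
  have hNT := powerset_total N vor Ior hIor_empty hIor (N \ T)
  rw [Finset.sdiff_sdiff_eq_self hT] at hNT
  rw [Finset.sdiff_self] at hN
  linarith
end

section
/- Let v = v_and + v_or be a decomposition of a set function v : Finset N → ℝ, with I_and defined from v_and by Möbius inversion and I_or defined from v_or by the OR-interaction formula, subject to I_and(∅) = v_and(∅) = v(∅) and v_or(∅) = 0. Then for every T ⊆ N: v(T) = Σ_{S⊆T} I_and(S) + Σ_{S∩T≠∅} I_or(S). -/
open Finset in
lemma mobius_powerset {α : Type*} [DecidableEq α] (h : Finset α → ℝ) (W : Finset α) :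
    ∑ S ∈ W.powerset, ∑ U ∈ S.powerset, (-1 : ℝ) ^ (S.card - U.card) * h U = h W := by
  rw [Finset.sum_comm' (t' := W.powerset)
      (s' := fun U => W.powerset.filter (fun S => U ⊆ S))]
  · have key : ∀ U ∈ W.powerset,
        ∑ S ∈ W.powerset.filter (fun S => U ⊆ S), (-1 : ℝ) ^ (S.card - U.card) * h U
          = (if U = W then (1 : ℝ) else 0) * h U := by
      intro U hU
      rw [Finset.mem_powerset] at hU
      rw [← Finset.sum_mul]
      congr 1
      rw [Finset.sum_nbij' (i := fun S => S \ U) (j := fun R => U ∪ R)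
          (t := (W \ U).powerset) (g := fun R => (-1 : ℝ) ^ R.card)]
      · have hz := Finset.sum_powerset_neg_one_pow_card (x := W \ U)
        have hc : ((∑ m ∈ (W \ U).powerset, (-1 : ℤ) ^ m.card : ℤ) : ℝ)
            = ∑ m ∈ (W \ U).powerset, (-1 : ℝ) ^ m.card := by push_cast; rfl
        rw [← hc, hz]
        by_cases hUW : U = W
        · simp [hUW]
        · have : W \ U ≠ ∅ := by
            intro hcon
            exact hUW (Finset.Subset.antisymm hU (Finset.sdiff_eq_empty_iff_subset.mp hcon))
          simp [this, hUW]
      · intro S hS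
        simp only [Finset.mem_filter, Finset.mem_powerset] at hS
        exact Finset.mem_powerset.mpr (Finset.sdiff_subset_sdiff hS.1 Finset.Subset.rfl)
      · intro R hR
        rw [Finset.mem_powerset] at hR
        simp only [Finset.mem_filter, Finset.mem_powerset]
        exact ⟨Finset.union_subset hU (hR.trans Finset.sdiff_subset), Finset.subset_union_left⟩
      · intro S hS
        simp only [Finset.mem_filter, Finset.mem_powerset] at hS
        exact Finset.union_sdiff_of_subset hS.2
      · intro R hR
        rw [Finset.mem_powerset] at hR
        exact Finset.union_sdiff_cancel_left (Finset.disjoint_of_subset_right hR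
          Finset.sdiff_disjoint.symm)
      · intro S hS
        simp only [Finset.mem_filter, Finset.mem_powerset] at hS
        rw [Finset.card_sdiff_of_subset hS.2]
    rw [Finset.sum_congr rfl key]
    simp [Finset.sum_ite_eq' W.powerset W (fun U => h U)]
  · intro S U
    simp only [Finset.mem_powerset, Finset.mem_filter]
    constructor
    · rintro ⟨h1, h2⟩; exact ⟨⟨h1, h2⟩, h2.trans h1⟩
    · rintro ⟨⟨h1, h2⟩, _⟩; exact ⟨h1, h2⟩

/-- Universal matching (Theorem 3.3): the output `v(T)` decomposes into the sum of
AND interactions over `S ⊆ T` and OR interactions over `S` with `S ∩ T ≠ ∅`. -/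
theorem universal_matching {α : Type*} [DecidableEq α]
    (N : Finset α) (v vand vor : Finset α → ℝ)
    (hdecomp : ∀ T : Finset α, v T = vand T + vor T)
    (hvand_empty : vand ∅ = v ∅)
    (hvor_empty : vor ∅ = 0)
    (Iand Ior : Finset α → ℝ)
    (hIand : ∀ S : Finset α,
      Iand S = ∑ T ∈ S.powerset, (-1 : ℝ) ^ (S.card - T.card) * vand T)
    (hIor_empty : Ior ∅ = 0)
    (hIor : ∀ S : Finset α, S ≠ ∅ →
      Ior S = -∑ T ∈ S.powerset, (-1 : ℝ) ^ (S.card - T.card) * vor (N \ T))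
    (T : Finset α) (hT : T ⊆ N) :
    v T = ∑ S ∈ T.powerset, Iand S
        + ∑ S ∈ N.powerset.filter (fun S => (S ∩ T).Nonempty), Ior S := by
  set g : Finset α → ℝ :=
    fun S => ∑ U ∈ S.powerset, (-1 : ℝ) ^ (S.card - U.card) * vor (N \ U) with hg
  have hand : ∑ S ∈ T.powerset, Iand S = vand T := by
    rw [Finset.sum_congr rfl (fun S _ => hIand S)]
    exact mobius_powerset vand T
  have hgsum : ∀ W : Finset α, ∑ S ∈ W.powerset, g S = vor (N \ W) := by
    intro W
    exact mobius_powerset (fun U => vor (N \ U)) W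
  have hor : ∑ S ∈ N.powerset.filter (fun S => (S ∩ T).Nonempty), Ior S = vor T := by
    have h1 : ∀ S ∈ N.powerset.filter (fun S => (S ∩ T).Nonempty), Ior S = -g S := by
      intro S hS
      simp only [Finset.mem_filter] at hS
      apply hIor
      intro hcon
      rw [hcon] at hS
      simp at hS
    rw [Finset.sum_congr rfl h1, Finset.sum_neg_distrib]
    have hsplit := Finset.sum_filter_add_sum_filter_not N.powerset
      (fun S => (S ∩ T).Nonempty) g
    have h2 : N.powerset.filter (fun S => ¬(S ∩ T).Nonempty) = (N \ T).powerset := by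
      ext S
      simp only [Finset.mem_filter, Finset.mem_powerset, Finset.not_nonempty_iff_eq_empty,
        ← Finset.disjoint_iff_inter_eq_empty, Finset.subset_sdiff]
    have h3 : ∑ S ∈ N.powerset.filter (fun S => (S ∩ T).Nonempty), g S
        = vor ∅ - vor T := by
      have e1 : ∑ S ∈ N.powerset, g S = vor ∅ := by
        rw [hgsum N, Finset.sdiff_self]
      have e2 : ∑ S ∈ N.powerset.filter (fun S => ¬(S ∩ T).Nonempty), g S = vor T := by
        rw [h2, hgsum (N \ T), Finset.sdiff_sdiff_eq_self hT]
      linarith [hsplit, e1, e2]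
    rw [h3, hvor_empty]
    ring
  rw [hand, hor, hdecomp T]
end

section
/- Symmetry property: if i, j ∈ N are symmetric for v, i.e. v(T ∪ {i}) = v(T ∪ {j}) for all T ⊆ N\{i,j}, then for every S ⊆ N\{i,j}, I_and(S ∪ {i}) = I_and(S ∪ {j}). -/
/-- Symmetry property: symmetric players have equal AND interactions. -/
theorem and_interaction_symmetry {α : Type*} [DecidableEq α]
    (N : Finset α) (v : Finset α → ℝ) (i j : α)
    (hi : i ∈ N) (hj : j ∈ N) (hij : i ≠ j)
    (hsym : ∀ T : Finset α, T ⊆ (N.erase i).erase j →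
      v (T ∪ {i}) = v (T ∪ {j}))
    (S : Finset α) (hS : S ⊆ (N.erase i).erase j) :
    (∑ T ∈ (S ∪ {i}).powerset, (-1 : ℝ) ^ ((S ∪ {i}).card - T.card) * v T)
      = ∑ T ∈ (S ∪ {j}).powerset, (-1 : ℝ) ^ ((S ∪ {j}).card - T.card) * v T := by
  have hiS : i ∉ S := fun h => (Finset.mem_erase.1 (Finset.mem_of_mem_erase (hS h))).1 rfl
  have hjS : j ∉ S := fun h => (Finset.mem_erase.1 (hS h)).1 rfl
  have hu : ∀ a : α, S ∪ {a} = insert a S := fun a => by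
    rw [Finset.union_comm, ← Finset.insert_eq]
  rw [hu, hu,
    Finset.sum_powerset_insert hiS, Finset.sum_powerset_insert hjS,
    Finset.card_insert_of_notMem hiS, Finset.card_insert_of_notMem hjS]
  congr 1
  apply Finset.sum_congr rfl
  intro T hT
  have hTS := Finset.mem_powerset.1 hT
  have hiT : i ∉ T := fun h => hiS (hTS h)
  have hjT : j ∉ T := fun h => hjS (hTS h)
  rw [Finset.card_insert_of_notMem hiT, Finset.card_insert_of_notMem hjT]
  have : v (insert i T) = v (insert j T) := by
    have := hsym T (hTS.trans hS)
    rwa [Finset.union_comm T {i}, Finset.union_comm T {j},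
      ← Finset.insert_eq, ← Finset.insert_eq] at this
  rw [this]
end

section
/- For the pure OR function v(T) = 1 if T ∩ S₀ ≠ ∅ and 0 otherwise (for fixed nonempty S₀ ⊆ N), the OR interaction I_or(S) = -Σ_{T⊆S} (-1)^{|S|-|T|} v(N\T) satisfies I_or(S₀) = 1 and I_or(S) = 0 for all nonempty S ≠ S₀ with S ⊆ S₀ or S ⊄ S₀ (i.e., for all nonempty S ≠ S₀). -/
open Finset

private lemma alt_sum' {α : Type*} [DecidableEq α] (S : Finset α) :
    ∑ T ∈ S.powerset, (-1 : ℝ) ^ (S.card - T.card) = if S = ∅ then 1 else 0 := by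
  have h : ∀ T ∈ S.powerset, (-1 : ℝ) ^ (S.card - T.card)
      = (-1) ^ S.card * (-1) ^ T.card := by
    intro T hT
    rw [mem_powerset] at hT
    have hc : S.card - T.card + T.card = S.card := Nat.sub_add_cancel (card_le_card hT)
    have h1 : ((-1 : ℝ) ^ T.card) * ((-1 : ℝ) ^ T.card) = 1 := by
      rw [← mul_pow]; norm_num
    calc (-1 : ℝ) ^ (S.card - T.card)
        = (-1) ^ (S.card - T.card) * ((-1) ^ T.card * (-1) ^ T.card) := by rw [h1, mul_one]
      _ = (-1) ^ S.card * (-1) ^ T.card := by rw [← mul_assoc, ← pow_add, hc]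
  rw [Finset.sum_congr rfl h, ← mul_sum]
  have : ∑ T ∈ S.powerset, (-1 : ℝ) ^ T.card
      = ((∑ T ∈ S.powerset, (-1 : ℤ) ^ T.card : ℤ) : ℝ) := by push_cast; rfl
  rw [this, Finset.sum_powerset_neg_one_pow_card]
  split <;> simp_all

private lemma filt_sum' {α : Type*} [DecidableEq α] (S S₀ : Finset α) (hSS : S₀ ⊆ S) :
    ∑ T ∈ S.powerset.filter (fun T => S₀ ⊆ T), (-1 : ℝ) ^ (S.card - T.card)
      = if S = S₀ then 1 else 0 := by
  have this := alt_sum' (S \ S₀)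
  have hiff : S \ S₀ = ∅ ↔ S = S₀ := by
    rw [sdiff_eq_empty_iff_subset]
    exact ⟨fun h => le_antisymm h hSS, fun h => h ▸ le_rfl⟩
  have h2 : (if S \ S₀ = ∅ then (1:ℝ) else 0) = if S = S₀ then 1 else 0 := by
    rcases em (S = S₀) with h | h
    · rw [if_pos (hiff.2 h), if_pos h]
    · rw [if_neg (fun hc => h (hiff.1 hc)), if_neg h]
  rw [← h2, ← this]
  apply Finset.sum_nbij' (fun T => T \ S₀) (fun T => T ∪ S₀)
  · intro T hT
    simp only [mem_filter, mem_powerset] at hT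
    exact mem_powerset.2 (sdiff_subset_sdiff hT.1 le_rfl)
  · intro T hT
    rw [mem_powerset] at hT
    simp only [mem_filter, mem_powerset]
    exact ⟨union_subset (hT.trans (sdiff_subset)) hSS, subset_union_right⟩
  · intro T hT
    simp only [mem_filter, mem_powerset] at hT
    exact sdiff_union_of_subset hT.2
  · intro T hT
    rw [mem_powerset] at hT
    rw [union_sdiff_right]
    exact Finset.sdiff_eq_self_iff_disjoint.2 (Finset.sdiff_disjoint.mono_left hT)
  · intro T hT
    simp only [mem_filter, mem_powerset] at hT
    congr 1
    have h1 : (T \ S₀).card = T.card - S₀.card := card_sdiff_of_subset hT.2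
    have h2 : (S \ S₀).card = S.card - S₀.card := card_sdiff_of_subset hSS
    have h3 := card_le_card hT.1
    have h4 := card_le_card hT.2
    rw [h1, h2]
    omega

private lemma key' {α : Type*} [DecidableEq α] (N S₀ : Finset α) (hS₀ : S₀ ⊆ N)
    (v : Finset α → ℝ)
    (hv : ∀ T : Finset α, v T = if (T ∩ S₀).Nonempty then 1 else 0)
    (S : Finset α) (hSne : S.Nonempty) :
    (-∑ T ∈ S.powerset, (-1 : ℝ) ^ (S.card - T.card) * v (N \ T))
      = if S = S₀ then 1 else 0 := by
  have hterm : ∀ T : Finset α, v (N \ T) = if S₀ ⊆ T then 0 else 1 := by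
    intro T
    rw [hv]
    have : (N \ T) ∩ S₀ = S₀ \ T := by
      ext x
      simp only [mem_inter, mem_sdiff]
      exact ⟨fun h => ⟨h.2, h.1.2⟩, fun h => ⟨⟨hS₀ h.1, h.2⟩, h.1⟩⟩
    rw [this]
    rcases em (S₀ ⊆ T) with h | h
    · simp [sdiff_eq_empty_iff_subset.2 h, h, Finset.not_nonempty_empty]
    · rw [if_neg h, if_pos]
      rw [← sdiff_eq_empty_iff_subset] at h
      exact nonempty_iff_ne_empty.2 h
  have hsplit : ∑ T ∈ S.powerset, (-1 : ℝ) ^ (S.card - T.card) * v (N \ T)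
      = ∑ T ∈ S.powerset, (-1 : ℝ) ^ (S.card - T.card)
        - ∑ T ∈ S.powerset.filter (fun T => S₀ ⊆ T), (-1 : ℝ) ^ (S.card - T.card) := by
    rw [Finset.sum_filter, eq_sub_iff_add_eq, ← Finset.sum_add_distrib]
    apply Finset.sum_congr rfl
    intro T _
    rw [hterm T]
    rcases em (S₀ ⊆ T) with h | h <;> simp [h]
  rw [hsplit, alt_sum' S, if_neg (nonempty_iff_ne_empty.1 hSne)]
  rcases em (S₀ ⊆ S) with h | h
  · rw [filt_sum' S S₀ h, zero_sub, neg_neg]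
  · have hfilt : S.powerset.filter (fun T => S₀ ⊆ T) = ∅ := by
      apply Finset.filter_eq_empty_iff.2
      intro T hT hc
      exact h (hc.trans (mem_powerset.1 hT))
    have hne : S ≠ S₀ := by rintro rfl; exact h le_rfl
    rw [hfilt, if_neg hne]
    simp

/-- For the pure OR function (indicator of intersecting `S₀`), the OR interaction
is `1` at `S₀` and `0` at every other nonempty subset. -/
theorem or_interaction_pure_or {α : Type*} [DecidableEq α]
    (N : Finset α) (S₀ : Finset α) (hS₀ : S₀ ⊆ N) (hS₀ne : S₀.Nonempty)
    (hS₀N : S₀ ≠ N)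
    (v : Finset α → ℝ)
    (hv : ∀ T : Finset α, v T = if (T ∩ S₀).Nonempty then 1 else 0) :
    (-∑ T ∈ S₀.powerset, (-1 : ℝ) ^ (S₀.card - T.card) * v (N \ T)) = 1 ∧
    (∀ S : Finset α, S ⊆ N → S.Nonempty → S ≠ S₀ →
      (-∑ T ∈ S.powerset, (-1 : ℝ) ^ (S.card - T.card) * v (N \ T)) = 0) := by
  constructor
  · rw [key' N S₀ hS₀ v hv S₀ hS₀ne, if_pos rfl]
  · intro S _ hSne hne
    rw [key' N S₀ hS₀ v hv S hSne, if_neg hne]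
end
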